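/- Let M ≥ 2 and B ≥ 0 be natural numbers, and let a = M/(M − 1) as a real number. Then 2^B · (Γ(2^B)·Γ(a) / Γ(2^B + a)) ≤ 2^(−B/(M − 1)), where Γ denotes the real Gamma function; equivalently, 2^B · β(2^B, M/(M − 1)) ≤ 2^(−B/(M − 1)) where β(x, y) = Γ(x)Γ(y)/Γ(x + y) is the Beta function. -/

import Mathlib

/-!
Log-convexity of `Γ`, applied at `x + 1 = t • (x + t) + (1 - t) • (x + t + 1)`, gives the lower
Gautschi-type bound `x ^ a * Γ x ≤ Γ (x + a)` for `1 ≤ a ≤ 2`; convexity of `Γ` with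
`Γ 1 = Γ 2 = 1` gives `Γ a ≤ 1` there. Hence `x * β(x, a) ≤ x ^ (1 - a)`, and for
`x = 2 ^ B`, `a = M / (M - 1)` the exponent is `B * (1 - a) = -B / (M - 1)`.
-/

open Set

namespace Real

theorem Gamma_add_one_le_rpow_mul_Gamma_add {x t : ℝ} (hx : 0 < x) (ht₀ : 0 ≤ t)
    (ht₁ : t ≤ 1) :
    Gamma (x + 1) ≤ (x + t) ^ (1 - t) * Gamma (x + t) := by
  have hxt : 0 < x + t := by positivity
  have hconv := convexOn_log_Gamma.2 (mem_Ioi.2 hxt) (mem_Ioi.2 (by positivity : 0 < x + t + 1))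
    ht₀ (sub_nonneg.2 ht₁) (add_sub_cancel t 1)
  have hcomb : t • (x + t) + (1 - t) • (x + t + 1) = x + 1 := by simp only [smul_eq_mul]; ring
  have hlog : t • (log ∘ Gamma) (x + t) + (1 - t) • (log ∘ Gamma) (x + t + 1)
      = log ((x + t) ^ (1 - t) * Gamma (x + t)) := by
    have hΓ := Gamma_pos_of_pos hxt
    simp only [Function.comp, smul_eq_mul, Gamma_add_one hxt.ne', log_mul hxt.ne' hΓ.ne',
      log_mul (rpow_pos_of_pos hxt _).ne' hΓ.ne', log_rpow hxt]
    ring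
  rw [hcomb, hlog, Function.comp_apply] at hconv
  exact (log_le_log_iff (Gamma_pos_of_pos (by positivity)) (by positivity)).1 hconv

theorem rpow_mul_Gamma_le_Gamma_add {x a : ℝ} (hx : 0 < x) (ha₁ : 1 ≤ a) (ha₂ : a ≤ 2) :
    x ^ a * Gamma x ≤ Gamma (x + a) := by
  set t := a - 1
  have hxt : 0 < x + t := by positivity
  calc x ^ a * Gamma x = x ^ t * Gamma (x + 1) := by
        rw [Gamma_add_one hx.ne', show a = t + 1 by ring, rpow_add_one hx.ne']; ring
    _ ≤ x ^ t * ((x + t) ^ (1 - t) * Gamma (x + t)) := by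
        gcongr; exact Gamma_add_one_le_rpow_mul_Gamma_add hx (by linarith) (by linarith)
    _ ≤ (x + t) ^ t * ((x + t) ^ (1 - t) * Gamma (x + t)) := by
        gcongr; linarith
    _ = Gamma (x + a) := by
        rw [← mul_assoc, ← rpow_add hxt, add_sub_cancel, rpow_one, ← Gamma_add_one hxt.ne']
        congr 1; ring

theorem Gamma_le_one_of_mem_Icc {a : ℝ} (ha : a ∈ Icc 1 2) : Gamma a ≤ 1 := by
  rw [← segment_eq_Icc one_le_two] at ha
  have h := convexOn_Gamma.le_on_segment (mem_Ioi.2 one_pos) (mem_Ioi.2 two_pos) ha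
  rwa [Gamma_one, Gamma_two, max_self] at h

theorem mul_Gamma_mul_Gamma_div_Gamma_add_le_rpow {x a : ℝ} (hx : 0 < x) (ha₁ : 1 ≤ a)
    (ha₂ : a ≤ 2) :
    x * (Gamma x * Gamma a / Gamma (x + a)) ≤ x ^ (1 - a) := by
  have hΓa := Gamma_le_one_of_mem_Icc ⟨ha₁, ha₂⟩
  have hgrowth := rpow_mul_Gamma_le_Gamma_add hx ha₁ ha₂
  calc x * (Gamma x * Gamma a / Gamma (x + a))
      ≤ x * (Gamma x * Gamma a / (x ^ a * Gamma x)) := by gcongr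
    _ = x * Gamma a / x ^ a := by field_simp
    _ ≤ x * 1 / x ^ a := by gcongr
    _ = x ^ (1 - a) := by rw [mul_one, rpow_sub hx, rpow_one]

end Real

/-- The RVQ mean-square quantization error bound: for a codebook of `2^B`
codewords quantizing an `M`-dimensional unit-norm channel direction,
`σ_q² = 2^B · β(2^B, M/(M−1)) ≤ 2^(−B/(M−1))`, where
`β(x, y) = Γ(x)Γ(y)/Γ(x + y)`. -/
theorem rvq_quantization_error_bound
    (M B : ℕ) (hM : 2 ≤ M) :
    (2 : ℝ) ^ B *
        (Real.Gamma ((2 : ℝ) ^ B) * Real.Gamma ((M : ℝ) / ((M : ℝ) - 1)) /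
          Real.Gamma ((2 : ℝ) ^ B + (M : ℝ) / ((M : ℝ) - 1)))
      ≤ (2 : ℝ) ^ (-(B : ℝ) / ((M : ℝ) - 1)) := by
  have hM₂ : (2 : ℝ) ≤ M := by exact_mod_cast hM
  have hM₁ : (0 : ℝ) < M - 1 := by linarith
  have ha₁ : 1 ≤ (M : ℝ) / (M - 1) := by rw [le_div_iff₀ hM₁]; linarith
  have ha₂ : (M : ℝ) / (M - 1) ≤ 2 := by rw [div_le_iff₀ hM₁]; linarith
  have hexp : (B : ℝ) * (1 - M / (M - 1)) = -B / (M - 1) := by field_simp; ring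
  calc _ ≤ ((2 : ℝ) ^ B) ^ (1 - (M : ℝ) / (M - 1)) :=
        Real.mul_Gamma_mul_Gamma_div_Gamma_add_le_rpow (by positivity) ha₁ ha₂
    _ = _ := by rw [← Real.rpow_natCast, ← Real.rpow_mul zero_le_two, hexp]
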